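/- There is an absolute constant C such that for every natural number A, ∑_{B=0}^{A} binom(A,B)/binom(2A,2B) ≤ C. -/

import Mathlib

/-!
Vandermonde's identity contains the term `binom(A,B)^2` in the expansion of `binom(2A,2B)`, so the
`B`-th summand is at most `1 / binom(A,B)`. Since `binom(A,B) ≥ 2^min(B, A-B)`, that is at most
`2^{-B} + 2^{-(A-B)}`, and two geometric series bound the sum by `4`.
-/

namespace WKE

open Finset

lemma two_pow_le_centralBinom (n : ℕ) : 2 ^ n ≤ n.centralBinom := by
  induction n with
  | zero => simp
  | succ n ih =>
    refine Nat.le_of_mul_le_mul_left ?_ n.succ_pos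
    calc (n + 1) * 2 ^ (n + 1) = 2 * (n + 1) * 2 ^ n := by ring
      _ ≤ 2 * (2 * n + 1) * n.centralBinom := by gcongr; omega
      _ = (n + 1) * (n + 1).centralBinom := (Nat.succ_mul_centralBinom_succ n).symm

lemma two_pow_le_choose_of_two_mul_le {n k : ℕ} (h : 2 * k ≤ n) : 2 ^ k ≤ n.choose k :=
  (two_pow_le_centralBinom k).trans (Nat.choose_le_choose k h)

lemma choose_mul_choose_le_choose_two_mul (n k : ℕ) :
    n.choose k * n.choose k ≤ (2 * n).choose (2 * k) := by
  rw [two_mul n, Nat.add_choose_eq]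
  exact single_le_sum (f := fun p ↦ n.choose p.1 * n.choose p.2) (fun _ _ ↦ Nat.zero_le _)
    (by simp [two_mul] : (k, k) ∈ antidiagonal (2 * k))

lemma choose_div_choose_two_mul_le_inv_choose (n k : ℕ) :
    (n.choose k : ℝ) / (2 * n).choose (2 * k) ≤ (n.choose k : ℝ)⁻¹ := by
  rcases (n.choose k).eq_zero_or_pos with hzero | hpos
  · simp [hzero]
  · have hpos : (0 : ℝ) < n.choose k := Nat.cast_pos.mpr hpos
    calc (n.choose k : ℝ) / (2 * n).choose (2 * k)
        ≤ n.choose k / (n.choose k * n.choose k) :=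
          div_le_div_of_nonneg_left hpos.le (by positivity)
            (by exact_mod_cast choose_mul_choose_le_choose_two_mul n k)
      _ = (n.choose k : ℝ)⁻¹ := by field_simp

lemma inv_choose_le_half_pow_add_half_pow {n k : ℕ} (h : k ≤ n) :
    (n.choose k : ℝ)⁻¹ ≤ (1 / 2) ^ k + (1 / 2) ^ (n - k) := by
  have inv_le_of_two_pow_le {j : ℕ} (hj : 2 ^ j ≤ n.choose k) :
      (n.choose k : ℝ)⁻¹ ≤ (1 / 2) ^ j := by
    rw [one_div, inv_pow]
    exact inv_anti₀ (by positivity) (by exact_mod_cast hj)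
  rcases le_total (2 * k) n with hk | hk
  · exact (inv_le_of_two_pow_le (two_pow_le_choose_of_two_mul_le hk)).trans
      (le_add_of_nonneg_right (by positivity))
  · have hsymm : 2 ^ (n - k) ≤ n.choose k :=
      Nat.choose_symm h ▸ two_pow_le_choose_of_two_mul_le (by omega)
    exact (inv_le_of_two_pow_le hsymm).trans (le_add_of_nonneg_left (by positivity))

lemma sum_range_succ_half_pow_sub_le_two (n : ℕ) :
    ∑ k ∈ range (n + 1), (1 / 2 : ℝ) ^ (n - k) ≤ 2 := by
  rw [← sum_range_reflect]
  refine (sum_congr rfl fun k hk ↦ ?_).trans_le (sum_geometric_two_le (n + 1))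
  rw [Nat.add_sub_cancel, Nat.sub_sub_self (Nat.le_of_lt_succ (mem_range.1 hk))]

/-- Inequality (A.4) of Deng–Hani: there is an absolute constant `C` such that for every
natural number `A`, `∑_{B=0}^{A} binom(A,B) / binom(2A,2B) ≤ C`. -/
theorem binomial_ratio_sum_bounded :
    ∃ C : ℝ, ∀ A : ℕ,
      ∑ B ∈ Finset.range (A + 1), ((A.choose B : ℝ) / ((2 * A).choose (2 * B) : ℝ)) ≤ C := by
  refine ⟨4, fun A ↦ ?_⟩
  calc ∑ B ∈ range (A + 1), (A.choose B : ℝ) / (2 * A).choose (2 * B)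
      ≤ ∑ B ∈ range (A + 1), ((1 / 2 : ℝ) ^ B + (1 / 2) ^ (A - B)) := by
        refine sum_le_sum fun B hB ↦ ?_
        exact (choose_div_choose_two_mul_le_inv_choose A B).trans
          (inv_choose_le_half_pow_add_half_pow (Nat.le_of_lt_succ (mem_range.1 hB)))
    _ ≤ 2 + 2 := by
        rw [sum_add_distrib]
        exact add_le_add (sum_geometric_two_le _) (sum_range_succ_half_pow_sub_le_two A)
    _ = 4 := by norm_num

end WKE
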